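/- arXiv:1710.10812 — 4 statements merged into one kernel-verified Lean document; each statement's English description precedes it below -/
import Mathlib

section
/- Let a, b ∈ ℂ^N, let A, B ∈ ℂ^{M×M}, and set C_a = diag(a) ⊗ I_M and C_b = diag(b) ⊗ I_M ∈ ℂ^{NM×NM}. Then tr( C_a (1_{N×N} ⊗ A) C_a^H · C_b (1_{N×N} ⊗ B) C_b^H ) = |a^H b|² · tr(A B), where 1_{N×N} is the N×N all-ones matrix. -/
/-! By the mixed-product rule the matrix under the trace is
`(D_a J D_aᴴ · D_b J D_bᴴ) ⊗ (A B)` with `J` the all-ones matrix, and the trace of a Kronecker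
product is the product of the traces. Since `J = 1 1ᵀ`, each `D_c J D_cᴴ = c cᴴ` has rank one, so
the first trace is `(aᴴ b)(bᴴ a) = |aᴴ b|²`. -/

open Matrix Kronecker

namespace Matrix

variable {l m n R : Type*}

theorem of_const_one_eq_vecMulVec [MulOneClass R] :
    (of fun _ _ => (1 : R) : Matrix m n R) = vecMulVec 1 1 := by
  ext
  simp [vecMulVec_apply]

theorem diagonal_mul_vecMulVec [DecidableEq m] [Fintype m] [NonUnitalSemiring R]
    (c u : m → R) (v : n → R) : diagonal c * vecMulVec u v = vecMulVec (c * u) v := by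
  ext
  simp [vecMulVec_apply, mul_assoc]

theorem vecMulVec_mul_diagonal [DecidableEq n] [Fintype n] [NonUnitalSemiring R]
    (u : m → R) (v c : n → R) : vecMulVec u v * diagonal c = vecMulVec u (v * c) := by
  ext
  simp [vecMulVec_apply, mul_assoc]

theorem trace_vecMulVec_mul_vecMulVec [Fintype l] [Fintype m] [CommSemiring R]
    (u : l → R) (v w : m → R) (x : l → R) :
    (vecMulVec u v * vecMulVec w x).trace = (v ⬝ᵥ w) * (x ⬝ᵥ u) := by
  rw [vecMulVec_mul_vecMulVec, trace_vecMulVec, dotProduct_smul, smul_eq_mul, dotProduct_comm u x]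

theorem diagonal_mul_of_const_one_mul_diagonal_conjTranspose [DecidableEq n] [Fintype n]
    [CommSemiring R] [StarRing R] (c : n → R) :
    diagonal c * (of fun _ _ => (1 : R) : Matrix n n R) * (diagonal c)ᴴ =
      vecMulVec c (star c) := by
  rw [of_const_one_eq_vecMulVec, diagonal_mul_vecMulVec, diagonal_conjTranspose,
    vecMulVec_mul_diagonal, mul_one, one_mul]

end Matrix

/-- **Key trace identity for MOMA code matrices under flat correlation.**
For `a, b ∈ ℂ^N`, `A, B ∈ ℂ^{M×M}`, with code matrices `C_a = diag(a) ⊗ I_M` and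
`C_b = diag(b) ⊗ I_M`, and `1_{N×N}` the all-ones matrix,
`tr( C_a (1_{N×N} ⊗ A) C_aᴴ · C_b (1_{N×N} ⊗ B) C_bᴴ ) = |aᴴ b|² · tr(A B)`. -/
theorem trace_code_kronecker_product {N M : ℕ}
    (a b : Fin N → ℂ) (A B : Matrix (Fin M) (Fin M) ℂ) :
    (((Matrix.diagonal a ⊗ₖ (1 : Matrix (Fin M) (Fin M) ℂ)) *
        ((Matrix.of fun _ _ => (1 : ℂ) : Matrix (Fin N) (Fin N) ℂ) ⊗ₖ A) *
        (Matrix.diagonal a ⊗ₖ (1 : Matrix (Fin M) (Fin M) ℂ))ᴴ) *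
      ((Matrix.diagonal b ⊗ₖ (1 : Matrix (Fin M) (Fin M) ℂ)) *
        ((Matrix.of fun _ _ => (1 : ℂ) : Matrix (Fin N) (Fin N) ℂ) ⊗ₖ B) *
        (Matrix.diagonal b ⊗ₖ (1 : Matrix (Fin M) (Fin M) ℂ))ᴴ)).trace
      = (↑(‖star a ⬝ᵥ b‖ ^ 2) : ℂ) * (A * B).trace := by
  simp only [conjTranspose_kronecker, conjTranspose_one, ← mul_kronecker_mul, Matrix.one_mul,
    Matrix.mul_one, trace_kronecker, diagonal_mul_of_const_one_mul_diagonal_conjTranspose,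
    trace_vecMulVec_mul_vecMulVec]
  rw [star_dotProduct b a, Complex.ofReal_pow, ← Complex.mul_conj', Complex.star_def]
end

section
/- Let S_1, …, S_J ∈ ℂ^{I×I} be Hermitian positive semidefinite and ρ > 0. Define f : [0,∞)^J → [0,∞)^J by f(δ)_k = (1/I)·tr( S_k · ( (1/I) Σ_{j=1}^J S_j/(1+δ_j) + ρ I_I )^{−1} ). Then f is monotone: if 0 ≤ δ_j ≤ δ'_j for all j, then f(δ)_k ≤ f(δ')_k for all k. -/
/-!
The matrix `(1/I) ∑ⱼ Sⱼ/(1+δⱼ) + ρ I` decreases in the Löwner order as `δ` grows, because each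
weight `1/(1+δⱼ)` does and the `Sⱼ` are positive semidefinite. Inversion reverses the Löwner
order on positive definite matrices, and `X ↦ tr(S X)` is monotone for `S ⪰ 0`: writing
`S = Nᴴ N`, `tr(S Y) = tr(N Y Nᴴ) ≥ 0` whenever `Y ⪰ 0`.
-/

open Matrix
open scoped ComplexOrder

/-- The deterministic-equivalent resolvent matrix
`T(ρ, I, {S_j}; δ) = ( (1/I) ∑_j S_j/(1+δ_j) + ρ I_I )⁻¹`. -/
noncomputable def detEquivT {I J : ℕ} (S : Fin J → Matrix (Fin I) (Fin I) ℂ)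
    (ρ : ℝ) (δ : Fin J → ℝ) : Matrix (Fin I) (Fin I) ℂ :=
  (((I : ℂ))⁻¹ • (∑ j, ((((1 + δ j)⁻¹ : ℝ)) : ℂ) • S j) + (ρ : ℂ) • 1)⁻¹

/-- The fixed-point iteration map `f(δ)_k = (1/I) tr( S_k T(ρ, I, {S_j}; δ) )`
(a real number, expressed via the real part of the complex trace). -/
noncomputable def detEquivF {I J : ℕ} (S : Fin J → Matrix (Fin I) (Fin I) ℂ)
    (ρ : ℝ) (δ : Fin J → ℝ) (k : Fin J) : ℝ :=
  ((I : ℝ))⁻¹ * ((S k * detEquivT S ρ δ).trace).re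

open scoped MatrixOrder

namespace Matrix

variable {n 𝕜 : Type*} [Fintype n] [RCLike 𝕜]

lemma PosSemidef.trace_mul_nonneg {A B : Matrix n n 𝕜} (hA : A.PosSemidef) (hB : B.PosSemidef) :
    0 ≤ (A * B).trace := by
  classical
  obtain ⟨N, rfl⟩ := CStarAlgebra.nonneg_iff_eq_star_mul_self.mp hA.nonneg
  rw [star_eq_conjTranspose, Matrix.mul_assoc, trace_mul_comm]
  exact (hB.mul_mul_conjTranspose_same N).trace_nonneg

lemma trace_mul_le_trace_mul_of_le {S X Y : Matrix n n 𝕜} (hS : S.PosSemidef) (h : X ≤ Y) :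
    (S * X).trace ≤ (S * Y).trace := by
  rw [← sub_nonneg, ← trace_sub, ← Matrix.mul_sub]
  exact hS.trace_mul_nonneg (le_iff.mp h)

open scoped Matrix.Norms.L2Operator in
lemma inv_le_inv_of_le [DecidableEq n] {A B : Matrix n n ℂ} (hA : A.PosDef) (h : A ≤ B) :
    B⁻¹ ≤ A⁻¹ := by
  simpa only [← nonsing_inv_eq_ringInverse] using
    CStarAlgebra.ringInverse_le_ringInverse h hA.isStrictlyPositive

end Matrix

lemma detEquivT_le_detEquivT {I J : ℕ} {S : Fin J → Matrix (Fin I) (Fin I) ℂ}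
    (hS : ∀ j, (S j).PosSemidef) {ρ : ℝ} (hρ : 0 < ρ) {δ δ' : Fin J → ℝ}
    (hδ : ∀ j, 0 ≤ δ j) (hle : ∀ j, δ j ≤ δ' j) :
    detEquivT S ρ δ ≤ detEquivT S ρ δ' := by
  set M : (Fin J → ℝ) → Matrix (Fin I) (Fin I) ℂ :=
    fun d => (I : ℂ)⁻¹ • (∑ j, (((1 + d j)⁻¹ : ℝ) : ℂ) • S j) + (ρ : ℂ) • 1
  have hM_posDef : (M δ').PosDef := by
    refine PosDef.posSemidef_add (nonneg_iff_posSemidef.mp ?_)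
      (PosDef.one.smul (by exact_mod_cast hρ))
    refine smul_nonneg (by simp) (Finset.sum_nonneg fun j _ => smul_nonneg ?_ (hS j).nonneg)
    have := (hδ j).trans (hle j)
    exact_mod_cast (by positivity : (0 : ℝ) ≤ (1 + δ' j)⁻¹)
  have hM_le : M δ' ≤ M δ := by
    simp only [M]
    gcongr with j
    · exact (hS j).nonneg
    · have := hδ j
      exact_mod_cast inv_anti₀ (by positivity) (by linarith [hle j])
  exact inv_le_inv_of_le hM_posDef hM_le

theorem detEquivF_monotone_general {I J : ℕ}
    (S : Fin J → Matrix (Fin I) (Fin I) ℂ) (hS : ∀ j, (S j).PosSemidef)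
    (ρ : ℝ) (hρ : 0 < ρ)
    (δ δ' : Fin J → ℝ) (hδ : ∀ j, 0 ≤ δ j) (hle : ∀ j, δ j ≤ δ' j) :
    ∀ k, detEquivF S ρ δ k ≤ detEquivF S ρ δ' k := by
  intro k
  have htrace := trace_mul_le_trace_mul_of_le (hS k) (detEquivT_le_detEquivT hS hρ hδ hle)
  exact mul_le_mul_of_nonneg_left (Complex.le_def.mp htrace).1 (by positivity)

/-- **Monotonicity of the fixed-point iteration map.**
For Hermitian positive semidefinite `S_1, …, S_J ∈ ℂ^{I×I}` and `ρ > 0`, the map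
`f(δ)_k = (1/I) tr( S_k ((1/I) ∑_j S_j/(1+δ_j) + ρ I_I)⁻¹ )` is monotone on `[0,∞)^J`:
if `0 ≤ δ_j ≤ δ'_j` for all `j`, then `f(δ)_k ≤ f(δ')_k` for all `k`. -/
theorem detEquivF_monotone {I J : ℕ} (hI : 0 < I)
    (S : Fin J → Matrix (Fin I) (Fin I) ℂ) (hS : ∀ j, (S j).PosSemidef)
    (ρ : ℝ) (hρ : 0 < ρ)
    (δ δ' : Fin J → ℝ) (hδ : ∀ j, 0 ≤ δ j) (hle : ∀ j, δ j ≤ δ' j) :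
    ∀ k, detEquivF S ρ δ k ≤ detEquivF S ρ δ' k :=
  detEquivF_monotone_general S hS ρ hρ δ δ' hδ hle
end

section
/- Let S_1, …, S_J ∈ ℂ^{I×I} be Hermitian positive semidefinite matrices and ρ > 0. Define the sequence (δ^{(t)})_{t≥0} in [0,∞)^J by δ_k^{(0)} = 1/ρ and δ_k^{(t)} = (1/I)·tr( S_k · ( (1/I) Σ_{j=1}^J S_j/(1+δ_j^{(t−1)}) + ρ I_I )^{−1} ) for t ≥ 1. Then for each k the sequence (δ_k^{(t)})_{t≥0} converges to a nonnegative limit δ_k as t → ∞. -/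
open Matrix Filter
open scoped ComplexOrder

/-- The fixed-point iteration `δ_k^{(t)}`, initialized at `δ_k^{(0)} = 1/ρ`, with
`δ_k^{(t)} = (1/I) tr( S_k ((1/I) ∑_j S_j/(1+δ_j^{(t−1)}) + ρ I_I)⁻¹ )`. -/
noncomputable def detEquivIter {I J : ℕ} (S : Fin J → Matrix (Fin I) (Fin I) ℂ)
    (ρ : ℝ) : ℕ → Fin J → ℝ
  | 0 => fun _ => ρ⁻¹
  | t + 1 => fun k => detEquivF S ρ (detEquivIter S ρ t) k

set_option linter.unusedSectionVars false

open Matrix Filter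
open scoped ComplexOrder

variable {n : Type*} [Fintype n] [DecidableEq n]

open scoped MatrixOrder in
noncomputable def Matrix.PosSemidef.sqrt {A : Matrix n n ℂ} (_hA : A.PosSemidef) :
    Matrix n n ℂ := CFC.sqrt A

open scoped MatrixOrder in
lemma Matrix.PosSemidef.sqrt_mul_self {A : Matrix n n ℂ} (hA : A.PosSemidef) :
    hA.sqrt * hA.sqrt = A := CFC.sqrt_mul_sqrt_self A hA.nonneg

open scoped MatrixOrder in
lemma Matrix.PosSemidef.posSemidef_sqrt {A : Matrix n n ℂ} (hA : A.PosSemidef) :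
    hA.sqrt.PosSemidef := (CFC.sqrt_nonneg A).posSemidef

lemma psd_smul {c : ℝ} (hc : 0 ≤ c) {A : Matrix n n ℂ} (hA : A.PosSemidef) :
    ((c : ℂ) • A).PosSemidef := by
  refine posSemidef_iff_dotProduct_mulVec.mpr ⟨?_, fun x => ?_⟩
  · unfold Matrix.IsHermitian
    rw [conjTranspose_smul, hA.1.eq]
    congr 1
    simp [Complex.ext_iff]
  · rw [smul_mulVec, dotProduct_smul]
    exact mul_nonneg (by exact_mod_cast hc) (hA.dotProduct_mulVec_nonneg x)

lemma psd_sum {ι : Type*} (s : Finset ι) (f : ι → Matrix n n ℂ)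
    (h : ∀ i ∈ s, (f i).PosSemidef) : (∑ i ∈ s, f i).PosSemidef := by
  classical
  induction s using Finset.induction_on with
  | empty => simpa using Matrix.PosSemidef.zero
  | insert _ _ hni ih =>
    rw [Finset.sum_insert hni]
    exact (h _ (Finset.mem_insert_self _ _)).add
      (ih fun i hi => h i (Finset.mem_insert_of_mem hi))

lemma pd_smul_one {r : ℝ} (hr : 0 < r) : ((r : ℂ) • (1 : Matrix n n ℂ)).PosDef := by
  refine posDef_iff_dotProduct_mulVec.mpr ⟨?_, @fun x hx => ?_⟩
  · unfold Matrix.IsHermitian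
    rw [conjTranspose_smul, conjTranspose_one]
    congr 1
    simp [Complex.ext_iff]
  · rw [smul_mulVec, one_mulVec, dotProduct_smul]
    have h1 : 0 < star x ⬝ᵥ x := by
      rw [show star x ⬝ᵥ x = star x ⬝ᵥ (1 : Matrix n n ℂ) *ᵥ x by rw [one_mulVec]]
      exact Matrix.PosDef.one.dotProduct_mulVec_pos hx
    exact mul_pos (by exact_mod_cast hr) h1

/-- diag entries of PSD are nonneg, trace real-part characterization -/
lemma psd_diag_nonneg {A : Matrix n n ℂ} (hA : A.PosSemidef) (i : n) : 0 ≤ A i i := by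
  have := hA.dotProduct_mulVec_nonneg (Pi.single i 1)
  have h : star (Pi.single i (1:ℂ)) ⬝ᵥ A *ᵥ Pi.single i 1 = A i i := by
    rw [mulVec_single]
    simp [dotProduct, Pi.single_apply, apply_ite]
  rwa [h] at this

lemma psd_trace_nonneg {A : Matrix n n ℂ} (hA : A.PosSemidef) : 0 ≤ A.trace := by
  unfold Matrix.trace
  exact Finset.sum_nonneg fun i _ => psd_diag_nonneg hA i

lemma psd_trace_re_nonneg {A : Matrix n n ℂ} (hA : A.PosSemidef) : 0 ≤ A.trace.re :=
  (Complex.le_def.mp (psd_trace_nonneg hA)).1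

lemma psd_eq_zero_of_trace_re {A : Matrix n n ℂ} (hA : A.PosSemidef)
    (h : A.trace.re = 0) : A = 0 := by
  have hdiag : ∀ i, A i i = 0 := by
    have hre : ∀ i, 0 ≤ (A i i).re ∧ (A i i).im = 0 := fun i =>
      ⟨by simpa using (Complex.le_def.mp (psd_diag_nonneg hA i)).1,
       by simpa using (Complex.le_def.mp (psd_diag_nonneg hA i)).2.symm⟩
    have hsum : ∑ i, (A i i).re = 0 := by
      have := congrArg Complex.re (rfl : A.trace = A.trace)
      rw [show A.trace.re = ∑ i, (A i i).re by simp [Matrix.trace, Complex.re_sum]] at h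
      exact h
    intro i
    have : (A i i).re = 0 :=
      (Finset.sum_eq_zero_iff_of_nonneg (fun i _ => (hre i).1)).mp hsum i (Finset.mem_univ i)
    exact Complex.ext this (hre i).2
  have hcol : ∀ i, A *ᵥ Pi.single i 1 = 0 := by
    intro i
    rw [← (hA.dotProduct_mulVec_zero_iff (Pi.single i 1))]
    have h : star (Pi.single i (1:ℂ)) ⬝ᵥ A *ᵥ Pi.single i 1 = A i i := by
      rw [mulVec_single]
      simp [dotProduct, Pi.single_apply, apply_ite]
    rw [h]; exact hdiag i
  ext i j
  have := congrFun (hcol j) i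
  rw [mulVec_single] at this
  simpa using this

lemma sqrt_isUnit_det {A : Matrix n n ℂ} (hA : A.PosDef) :
    IsUnit (hA.posSemidef.sqrt).det := by
  have h : (hA.posSemidef.sqrt).det * (hA.posSemidef.sqrt).det = A.det := by
    rw [← det_mul, hA.posSemidef.sqrt_mul_self]
  have hd : A.det ≠ 0 := ne_of_gt hA.det_pos
  exact isUnit_iff_ne_zero.mpr (fun hz => hd (by rw [← h, hz, mul_zero]))

lemma trace_mul_psd_re_nonneg {P Q : Matrix n n ℂ} (hP : P.PosSemidef)
    (hQ : Q.PosSemidef) : 0 ≤ ((P * Q).trace).re := by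
  set s := hP.sqrt with hs
  have h1 : P * Q = s * s * Q := by rw [hP.sqrt_mul_self]
  have h2 : (s * s * Q).trace = (s * Q * s).trace := (trace_mul_cycle s Q s).symm
  have h3 : (s * Q * s).PosSemidef := by
    have := hQ.conjTranspose_mul_mul_same s
    rwa [hP.posSemidef_sqrt.isHermitian.eq] at this
  rw [h1, h2]
  exact psd_trace_re_nonneg h3

lemma trace_mul_pd_re_pos {P Q : Matrix n n ℂ} (hP : P.PosDef)
    (hQ : Q.PosSemidef) (hQ0 : Q ≠ 0) : 0 < ((Q * P).trace).re := by
  rcases lt_or_eq_of_le (trace_mul_psd_re_nonneg hQ hP.posSemidef) with h | h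
  · exact h
  exfalso
  set s := hQ.sqrt with hs
  have h1 : Q * P = s * s * P := by rw [hQ.sqrt_mul_self]
  have h2 : (s * s * P).trace = (s * P * s).trace := (trace_mul_cycle s P s).symm
  have h3 : (s * P * s).PosSemidef := by
    have := hP.posSemidef.conjTranspose_mul_mul_same s
    rwa [hQ.posSemidef_sqrt.isHermitian.eq] at this
  have h4 : s * P * s = 0 := by
    apply psd_eq_zero_of_trace_re h3
    rw [← h2, ← h1, ← h]
  -- P = sP * sP
  set p := hP.posSemidef.sqrt with hp
  have h5 : s * (p * p) * s = 0 := by rw [hP.posSemidef.sqrt_mul_self]; exact h4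
  have h6 : (p * s)ᴴ * (p * s) = 0 := by
    rw [conjTranspose_mul, hP.posSemidef.posSemidef_sqrt.isHermitian.eq,
      hQ.posSemidef_sqrt.isHermitian.eq]
    rw [show s * p * (p * s) = s * (p * p) * s by noncomm_ring]
    exact h5
  have h7 : p * s = 0 := conjTranspose_mul_self_eq_zero.mp h6
  have hpu : IsUnit p.det := sqrt_isUnit_det hP
  have h8 : s = 0 := by
    have := congrArg (fun M => p⁻¹ * M) h7
    simpa [← mul_assoc, Matrix.nonsing_inv_mul p hpu] using this
  exact hQ0 (by rw [← hQ.sqrt_mul_self, ← hs, h8, mul_zero])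

lemma pd_conj {B C : Matrix n n ℂ} (hB : B.PosDef) (hC : IsUnit C.det) :
    (Cᴴ * B * C).PosDef := by
  refine posDef_iff_dotProduct_mulVec.mpr ⟨?_, ?_⟩
  · exact isHermitian_conjTranspose_mul_mul C hB.1
  · intro x hx
    have hCx : C *ᵥ x ≠ 0 := by
      intro h
      have hinj := Matrix.mulVec_injective_iff_isUnit.mpr ((Matrix.isUnit_iff_isUnit_det C).mpr hC)
      exact hx (hinj (by rw [h, Matrix.mulVec_zero]))
    simpa only [star_mulVec, dotProduct_mulVec, vecMul_vecMul] using hB.dotProduct_mulVec_pos hCx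

/-- Key lemma: if `A ≤ B` (both positive definite) then `B⁻¹ ≤ A⁻¹`. -/
lemma inv_sub_inv_psd {A B : Matrix n n ℂ} (hA : A.PosDef) (hB : B.PosDef)
    (hAB : (B - A).PosSemidef) : (A⁻¹ - B⁻¹).PosSemidef := by
  set s := hA.posSemidef.sqrt with hsdef
  have hs : s * s = A := hA.posSemidef.sqrt_mul_self
  have hsherm : sᴴ = s := hA.posSemidef.posSemidef_sqrt.isHermitian.eq
  have hsu : IsUnit s.det := sqrt_isUnit_det hA
  set q := s⁻¹ with hqdef
  have hqherm : qᴴ = q := by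
    rw [hqdef, Matrix.conjTranspose_nonsing_inv, hsherm]
  have hqu : IsUnit q.det := by
    rwa [hqdef, Matrix.det_nonsing_inv, isUnit_ringInverse]
  have hqs : q * s = 1 := Matrix.nonsing_inv_mul s hsu
  have hsq : s * q = 1 := Matrix.mul_nonsing_inv s hsu
  -- D = q * B * q is PD and D - 1 is PSD
  set D := q * B * q with hDdef
  have hD : D.PosDef := by
    have := pd_conj hB hqu
    rwa [hqherm] at this
  have hD1 : (D - 1).PosSemidef := by
    have h1 : q * (B - A) * q = D - 1 := by
      rw [Matrix.mul_sub, Matrix.sub_mul, ← hs]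
      congr 1
      rw [show q * (s * s) * q = (q * s) * (s * q) by noncomm_ring, hqs, hsq, one_mul]
    have := hAB.conjTranspose_mul_mul_same q
    rwa [hqherm, h1] at this
  -- E = sqrt of D⁻¹
  have hDinv : (D⁻¹).PosDef := hD.inv
  set E := hDinv.posSemidef.sqrt with hEdef
  have hE : E * E = D⁻¹ := hDinv.posSemidef.sqrt_mul_self
  have hEherm : Eᴴ = E := hDinv.posSemidef.posSemidef_sqrt.isHermitian.eq
  have hEu : IsUnit E.det := sqrt_isUnit_det hDinv
  have hDu : IsUnit D.det := (Matrix.isUnit_iff_isUnit_det D).mp hD.isUnit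
  have hEinv : E⁻¹ * E⁻¹ = D := by
    rw [← Matrix.mul_inv_rev, hE, Matrix.nonsing_inv_nonsing_inv D hDu]
  have hEDE : E * D * E = 1 := by
    rw [← hEinv, show E * (E⁻¹ * E⁻¹) * E = (E * E⁻¹) * (E⁻¹ * E) by noncomm_ring,
      Matrix.mul_nonsing_inv E hEu, Matrix.nonsing_inv_mul E hEu, one_mul]
  have h1D : (1 - D⁻¹).PosSemidef := by
    have hEq : E * (D - 1) * E = 1 - D⁻¹ := by
      rw [Matrix.mul_sub, Matrix.sub_mul, hEDE, mul_one, hE]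
    have := hD1.conjTranspose_mul_mul_same E
    rwa [hEherm, hEq] at this
  have hqq : q * q = A⁻¹ := by
    rw [← hs, Matrix.mul_inv_rev]
  have hqDq : q * D⁻¹ * q = B⁻¹ := by
    have hqinv : q⁻¹ = s := Matrix.nonsing_inv_nonsing_inv s hsu
    rw [hDdef, Matrix.mul_inv_rev, Matrix.mul_inv_rev, hqinv,
      show q * (s * (B⁻¹ * s)) * q = (q * s) * B⁻¹ * (s * q) by noncomm_ring,
      hqs, hsq, one_mul, mul_one]
  have hfinal : q * (1 - D⁻¹) * q = A⁻¹ - B⁻¹ := by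
    rw [Matrix.mul_sub, Matrix.sub_mul, mul_one, hqq, hqDq]
  have := h1D.conjTranspose_mul_mul_same q
  rwa [hqherm, hfinal] at this

lemma inv_sub_inv_pd {A B : Matrix n n ℂ} (hA : A.PosDef) (hB : B.PosDef)
    (hAB : (B - A).PosDef) : (A⁻¹ - B⁻¹).PosDef := by
  set s := hA.posSemidef.sqrt with hsdef
  have hs : s * s = A := hA.posSemidef.sqrt_mul_self
  have hsherm : sᴴ = s := hA.posSemidef.posSemidef_sqrt.isHermitian.eq
  have hsu : IsUnit s.det := sqrt_isUnit_det hA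
  set q := s⁻¹ with hqdef
  have hqherm : qᴴ = q := by
    rw [hqdef, Matrix.conjTranspose_nonsing_inv, hsherm]
  have hqu : IsUnit q.det := by
    rwa [hqdef, Matrix.det_nonsing_inv, isUnit_ringInverse]
  have hqs : q * s = 1 := Matrix.nonsing_inv_mul s hsu
  have hsq : s * q = 1 := Matrix.mul_nonsing_inv s hsu
  set D := q * B * q with hDdef
  have hD : D.PosDef := by
    have := pd_conj hB hqu
    rwa [hqherm] at this
  have hD1 : (D - 1).PosDef := by
    have h1 : q * (B - A) * q = D - 1 := by
      rw [Matrix.mul_sub, Matrix.sub_mul, ← hs]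
      congr 1
      rw [show q * (s * s) * q = (q * s) * (s * q) by noncomm_ring, hqs, hsq, one_mul]
    have := pd_conj hAB hqu
    rwa [hqherm, h1] at this
  have hDinv : (D⁻¹).PosDef := hD.inv
  set E := hDinv.posSemidef.sqrt with hEdef
  have hE : E * E = D⁻¹ := hDinv.posSemidef.sqrt_mul_self
  have hEherm : Eᴴ = E := hDinv.posSemidef.posSemidef_sqrt.isHermitian.eq
  have hEu : IsUnit E.det := sqrt_isUnit_det hDinv
  have hDu : IsUnit D.det := (Matrix.isUnit_iff_isUnit_det D).mp hD.isUnit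
  have hEinv : E⁻¹ * E⁻¹ = D := by
    rw [← Matrix.mul_inv_rev, hE, Matrix.nonsing_inv_nonsing_inv D hDu]
  have hEDE : E * D * E = 1 := by
    rw [← hEinv, show E * (E⁻¹ * E⁻¹) * E = (E * E⁻¹) * (E⁻¹ * E) by noncomm_ring,
      Matrix.mul_nonsing_inv E hEu, Matrix.nonsing_inv_mul E hEu, one_mul]
  have h1D : (1 - D⁻¹).PosDef := by
    have hEq : E * (D - 1) * E = 1 - D⁻¹ := by
      rw [Matrix.mul_sub, Matrix.sub_mul, hEDE, mul_one, hE]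
    have := pd_conj hD1 hEu
    rwa [hEherm, hEq] at this
  have hqq : q * q = A⁻¹ := by
    rw [← hs, Matrix.mul_inv_rev]
  have hqDq : q * D⁻¹ * q = B⁻¹ := by
    have hqinv : q⁻¹ = s := Matrix.nonsing_inv_nonsing_inv s hsu
    rw [hDdef, Matrix.mul_inv_rev, Matrix.mul_inv_rev, hqinv,
      show q * (s * (B⁻¹ * s)) * q = (q * s) * B⁻¹ * (s * q) by noncomm_ring,
      hqs, hsq, one_mul, mul_one]
  have hfinal : q * (1 - D⁻¹) * q = A⁻¹ - B⁻¹ := by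
    rw [Matrix.mul_sub, Matrix.sub_mul, mul_one, hqq, hqDq]
  have := pd_conj h1D hqu
  rwa [hqherm, hfinal] at this

section W

variable {I J : ℕ} (S : Fin J → Matrix (Fin I) (Fin I) ℂ)

noncomputable def Wmat (c : Fin J → ℝ) (r : ℝ) : Matrix (Fin I) (Fin I) ℂ :=
  ((I : ℂ))⁻¹ • (∑ j, ((c j : ℝ) : ℂ) • S j) + (r : ℂ) • 1

lemma detEquivT_eq (ρ : ℝ) (δ : Fin J → ℝ) :
    detEquivT S ρ δ = (Wmat S (fun j => (1 + δ j)⁻¹) ρ)⁻¹ := rfl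

lemma Wmat_psd (hS : ∀ j, (S j).PosSemidef) {c : Fin J → ℝ} {r : ℝ} (hc : ∀ j, 0 ≤ c j) (hr : 0 ≤ r) :
    (Wmat S c r).PosSemidef := by
  have h1 : (∑ j, ((c j : ℝ) : ℂ) • S j).PosSemidef :=
    psd_sum _ _ fun j _ => psd_smul (hc j) (hS j)
  have h2 : (((I : ℂ))⁻¹ • (∑ j, ((c j : ℝ) : ℂ) • S j)).PosSemidef := by
    have : ((I : ℂ))⁻¹ = (((I : ℝ)⁻¹ : ℝ) : ℂ) := by push_cast; ring
    rw [this]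
    exact psd_smul (by positivity) h1
  have h3 : (((r : ℝ) : ℂ) • (1 : Matrix (Fin I) (Fin I) ℂ)).PosSemidef :=
    psd_smul hr Matrix.PosSemidef.one
  exact h2.add h3

lemma Wmat_pd (hS : ∀ j, (S j).PosSemidef) {c : Fin J → ℝ} {r : ℝ} (hc : ∀ j, 0 ≤ c j) (hr : 0 < r) :
    (Wmat S c r).PosDef := by
  have h1 : (∑ j, ((c j : ℝ) : ℂ) • S j).PosSemidef :=
    psd_sum _ _ fun j _ => psd_smul (hc j) (hS j)
  have h2 : (((I : ℂ))⁻¹ • (∑ j, ((c j : ℝ) : ℂ) • S j)).PosSemidef := by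
    have : ((I : ℂ))⁻¹ = (((I : ℝ)⁻¹ : ℝ) : ℂ) := by push_cast; ring
    rw [this]
    exact psd_smul (by positivity) h1
  exact Matrix.PosDef.posSemidef_add h2 (pd_smul_one hr)

lemma Wmat_sub (c c' : Fin J → ℝ) (r r' : ℝ) :
    Wmat S c r - Wmat S c' r' = Wmat S (c - c') (r - r') := by
  unfold Wmat
  simp only [Pi.sub_apply, Complex.ofReal_sub, sub_smul, Finset.sum_sub_distrib, smul_sub]
  abel

lemma Wmat_smul (c : Fin J → ℝ) (r a : ℝ) :
    Wmat S (fun j => a * c j) (a * r) = (a : ℂ) • Wmat S c r := by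
  unfold Wmat
  simp only [Complex.ofReal_mul, smul_add, smul_smul, Finset.smul_sum]
  congr 1
  refine Finset.sum_congr rfl fun j _ => ?_
  congr 1
  ring

end W

section F

variable {I J : ℕ} {S : Fin J → Matrix (Fin I) (Fin I) ℂ} {ρ : ℝ}

lemma trace_re_mono {Sk A B : Matrix (Fin I) (Fin I) ℂ} (hSk : Sk.PosSemidef)
    (h : (A - B).PosSemidef) : ((Sk * B).trace).re ≤ ((Sk * A).trace).re := by
  have h0 := trace_mul_psd_re_nonneg hSk h
  rw [Matrix.mul_sub, trace_sub, Complex.sub_re] at h0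
  linarith

lemma coeff_nonneg {δ : Fin J → ℝ} (hδ : ∀ k, 0 ≤ δ k) (j : Fin J) : 0 ≤ (1 + δ j)⁻¹ := by
  have := hδ j; positivity

lemma Mpd (hS : ∀ j, (S j).PosSemidef) (hρ : 0 < ρ) {δ : Fin J → ℝ} (hδ : ∀ k, 0 ≤ δ k) :
    (Wmat S (fun j => (1 + δ j)⁻¹) ρ).PosDef :=
  Wmat_pd S hS (coeff_nonneg hδ) hρ

lemma f_nonneg (hS : ∀ j, (S j).PosSemidef) (hρ : 0 < ρ) {δ : Fin J → ℝ}
    (hδ : ∀ k, 0 ≤ δ k) (k : Fin J) : 0 ≤ detEquivF S ρ δ k := by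
  rw [detEquivF, detEquivT_eq]
  exact mul_nonneg (by positivity)
    (trace_mul_psd_re_nonneg (hS k) (Mpd hS hρ hδ).inv.posSemidef)

lemma f_mono (hS : ∀ j, (S j).PosSemidef) (hρ : 0 < ρ) {δ δ' : Fin J → ℝ}
    (hδ : ∀ k, 0 ≤ δ k) (hle : ∀ k, δ k ≤ δ' k) (k : Fin J) :
    detEquivF S ρ δ k ≤ detEquivF S ρ δ' k := by
  have hδ' : ∀ k, 0 ≤ δ' k := fun k => le_trans (hδ k) (hle k)
  have hA : (Wmat S (fun j => (1 + δ' j)⁻¹) ρ).PosDef := Mpd hS hρ hδ'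
  have hB : (Wmat S (fun j => (1 + δ j)⁻¹) ρ).PosDef := Mpd hS hρ hδ
  have hsub : (Wmat S (fun j => (1 + δ j)⁻¹) ρ - Wmat S (fun j => (1 + δ' j)⁻¹) ρ).PosSemidef := by
    rw [Wmat_sub]
    refine Wmat_psd S hS (fun j => ?_) (by simp)
    have h1 : 0 < 1 + δ j := by have := hδ j; linarith
    have h2 : (1 + δ' j)⁻¹ ≤ (1 + δ j)⁻¹ :=
      inv_anti₀ h1 (by have := hle j; linarith)
    simpa using sub_nonneg.mpr h2
  have hinv := inv_sub_inv_psd hA hB hsub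
  rw [detEquivF, detEquivF, detEquivT_eq, detEquivT_eq]
  exact mul_le_mul_of_nonneg_left (trace_re_mono (hS k) hinv) (by positivity)

lemma f_le_bound (hS : ∀ j, (S j).PosSemidef) (hρ : 0 < ρ) {δ : Fin J → ℝ}
    (hδ : ∀ k, 0 ≤ δ k) (k : Fin J) :
    detEquivF S ρ δ k ≤ ((I : ℝ))⁻¹ * ((S k * (Wmat S 0 ρ)⁻¹).trace).re := by
  have hA : (Wmat S (0 : Fin J → ℝ) ρ).PosDef := Wmat_pd S hS (by simp) hρ
  have hB : (Wmat S (fun j => (1 + δ j)⁻¹) ρ).PosDef := Mpd hS hρ hδ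
  have hsub : (Wmat S (fun j => (1 + δ j)⁻¹) ρ - Wmat S 0 ρ).PosSemidef := by
    rw [Wmat_sub]
    refine Wmat_psd S hS (fun j => ?_) (by simp)
    simpa using coeff_nonneg hδ j
  have hinv := inv_sub_inv_psd hA hB hsub
  rw [detEquivF, detEquivT_eq]
  exact mul_le_mul_of_nonneg_left (trace_re_mono (hS k) hinv) (by positivity)

lemma f_pos (hI : 0 < I) (hS : ∀ j, (S j).PosSemidef) (hρ : 0 < ρ) {δ : Fin J → ℝ}
    (hδ : ∀ k, 0 ≤ δ k) {k : Fin J} (hk : S k ≠ 0) : 0 < detEquivF S ρ δ k := by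
  rw [detEquivF, detEquivT_eq]
  have h1 : (0:ℝ) < ((I : ℝ))⁻¹ := by positivity
  exact mul_pos h1 (trace_mul_pd_re_pos (Mpd hS hρ hδ).inv (hS k) hk)

lemma f_zero (ρ : ℝ) (δ : Fin J → ℝ) {k : Fin J} (hk : S k = 0) :
    detEquivF S ρ δ k = 0 := by
  rw [detEquivF, hk, Matrix.zero_mul, trace_zero]
  simp

lemma f_scal (hI : 0 < I) (hS : ∀ j, (S j).PosSemidef) (hρ : 0 < ρ) {δ : Fin J → ℝ}
    (hδ : ∀ k, 0 ≤ δ k) {α : ℝ} (hα : 1 < α) {k : Fin J} (hk : S k ≠ 0) :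
    detEquivF S ρ (fun j => α * δ j) k < α * detEquivF S ρ δ k := by
  have hα0 : (0:ℝ) < α := lt_trans one_pos hα
  set c : Fin J → ℝ := fun j => (1 + δ j)⁻¹ with hc
  set cN : Fin J → ℝ := fun j => (1 + α * δ j)⁻¹ with hcN
  set Mat := Wmat S c ρ with hMatdef
  set N := Wmat S cN ρ with hNdef
  set P := Wmat S (fun j => α⁻¹ * c j) (α⁻¹ * ρ) with hPdef
  have hδN : ∀ j, 0 ≤ α * δ j := fun j => mul_nonneg hα0.le (hδ j)
  have hN : N.PosDef := Mpd hS hρ hδN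
  have hMat : Mat.PosDef := Mpd hS hρ hδ
  have hP : P.PosDef := Wmat_pd S hS
    (fun j => mul_nonneg (by positivity) (coeff_nonneg hδ j)) (by positivity)
  have hNP : (N - P).PosDef := by
    rw [hNdef, hPdef, Wmat_sub]
    refine Wmat_pd S hS (fun j => ?_) ?_
    · have h1 : 0 < 1 + α * δ j := by have := hδ j; nlinarith
      have h2 : 1 + α * δ j ≤ α * (1 + δ j) := by nlinarith [hδ j]
      have h3 : (α * (1 + δ j))⁻¹ ≤ (1 + α * δ j)⁻¹ := inv_anti₀ h1 h2
      have h4 : (α * (1 + δ j))⁻¹ = α⁻¹ * (1 + δ j)⁻¹ := by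
        rw [mul_inv]
      simp only [Pi.sub_apply, hcN, hc]
      rw [← h4]
      linarith
    · have : α⁻¹ < 1 := inv_lt_one_of_one_lt₀ hα
      nlinarith
  have hinv : (P⁻¹ - N⁻¹).PosDef := inv_sub_inv_pd hP hN hNP
  have htr : ((S k * N⁻¹).trace).re < ((S k * P⁻¹).trace).re := by
    have h0 := trace_mul_pd_re_pos hinv (hS k) hk
    rw [Matrix.mul_sub, trace_sub, Complex.sub_re] at h0
    linarith
  have hPsmul : P = ((α⁻¹ : ℝ) : ℂ) • Mat := by
    rw [hPdef, hMatdef]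
    exact Wmat_smul S c ρ α⁻¹
  have hPinv : P⁻¹ = (α : ℂ) • Mat⁻¹ := by
    apply Matrix.inv_eq_right_inv
    rw [hPsmul, Matrix.smul_mul, Matrix.mul_smul, smul_smul,
      Matrix.mul_nonsing_inv Mat ((Matrix.isUnit_iff_isUnit_det Mat).mp hMat.isUnit)]
    rw [show ((α⁻¹ : ℝ) : ℂ) * (α : ℂ) = 1 by
      rw [← Complex.ofReal_mul, inv_mul_cancel₀ (ne_of_gt hα0)]; simp]
    simp
  have htr2 : ((S k * P⁻¹).trace).re = α * ((S k * Mat⁻¹).trace).re := by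
    rw [hPinv, mul_smul_comm, trace_smul]
    exact Complex.re_ofReal_mul α _
  rw [detEquivF, detEquivF, detEquivT_eq, detEquivT_eq]
  have hIpos : (0:ℝ) < ((I : ℝ))⁻¹ := by positivity
  calc ((I : ℝ))⁻¹ * ((S k * (Wmat S (fun j => (1 + α * δ j)⁻¹) ρ)⁻¹).trace).re
      < ((I : ℝ))⁻¹ * ((S k * P⁻¹).trace).re := by
        apply mul_lt_mul_of_pos_left _ hIpos
        exact htr
    _ = α * (((I : ℝ))⁻¹ * ((S k * (Wmat S c ρ)⁻¹).trace).re) := by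
        rw [htr2]; ring

end F

section Cont

variable {I J : ℕ} {S : Fin J → Matrix (Fin I) (Fin I) ℂ} {ρ : ℝ}

lemma f_contAt (hS : ∀ j, (S j).PosSemidef) (hρ : 0 < ρ) {δ₀ : Fin J → ℝ}
    (hδ₀ : ∀ k, 0 ≤ δ₀ k) (k : Fin J) :
    ContinuousAt (fun δ => detEquivF S ρ δ k) δ₀ := by
  have hMc : ContinuousAt (fun δ : Fin J → ℝ => Wmat S (fun j => (1 + δ j)⁻¹) ρ) δ₀ := by
    unfold Wmat
    refine ContinuousAt.add ?_ continuousAt_const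
    refine ContinuousAt.const_smul (c := ((I : ℂ))⁻¹) ?_
    have hterm : ∀ j : Fin J, ContinuousAt
        (fun δ : Fin J → ℝ => ((((1 + δ j)⁻¹ : ℝ)) : ℂ) • S j) δ₀ := by
      intro j
      refine ContinuousAt.smul (f := fun δ : Fin J → ℝ => ((((1 + δ j)⁻¹ : ℝ)) : ℂ)) ?_ continuousAt_const
      refine Complex.continuous_ofReal.continuousAt.comp ?_
      refine ContinuousAt.inv₀ (continuousAt_const.add (continuous_apply j).continuousAt) ?_
      have := hδ₀ j; positivity
    exact tendsto_finset_sum _ fun j _ => hterm j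
  have hMpd : (Wmat S (fun j => (1 + δ₀ j)⁻¹) ρ).PosDef := Mpd hS hρ hδ₀
  have hdet : IsUnit (Wmat S (fun j => (1 + δ₀ j)⁻¹) ρ).det :=
    (Matrix.isUnit_iff_isUnit_det _).mp hMpd.isUnit
  have hinvAt : ContinuousAt Inv.inv (Wmat S (fun j => (1 + δ₀ j)⁻¹) ρ) := by
    apply continuousAt_matrix_inv
    have h := NormedRing.inverse_continuousAt hdet.unit
    rwa [IsUnit.unit_spec] at h
  have houter : Continuous (fun X : Matrix (Fin I) (Fin I) ℂ =>
      ((I : ℝ))⁻¹ * ((S k * X).trace).re) := by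
    apply continuous_const.mul
    exact Complex.continuous_re.comp ((continuous_const.matrix_mul continuous_id).matrix_trace)
  have hmid : ContinuousAt
      (fun δ : Fin J → ℝ => (Wmat S (fun j => (1 + δ j)⁻¹) ρ)⁻¹) δ₀ :=
    ContinuousAt.comp (x := δ₀)
      (g := (Inv.inv : Matrix (Fin I) (Fin I) ℂ → Matrix (Fin I) (Fin I) ℂ))
      (f := fun δ : Fin J → ℝ => Wmat S (fun j => (1 + δ j)⁻¹) ρ)
      hinvAt hMc
  have hfin : ContinuousAt (fun δ : Fin J → ℝ =>
      ((I : ℝ))⁻¹ * ((S k * (Wmat S (fun j => (1 + δ j)⁻¹) ρ)⁻¹).trace).re) δ₀ :=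
    ContinuousAt.comp (x := δ₀)
      (g := fun X : Matrix (Fin I) (Fin I) ℂ => ((I : ℝ))⁻¹ * ((S k * X).trace).re)
      (f := fun δ : Fin J → ℝ => (Wmat S (fun j => (1 + δ j)⁻¹) ρ)⁻¹)
      houter.continuousAt hmid
  exact hfin

end Cont

noncomputable def lowSeq {I J : ℕ} (S : Fin J → Matrix (Fin I) (Fin I) ℂ) (ρ : ℝ) :
    ℕ → Fin J → ℝ
  | 0 => 0
  | t + 1 => fun k => detEquivF S ρ (lowSeq S ρ t) k

noncomputable def highSeq {I J : ℕ} (S : Fin J → Matrix (Fin I) (Fin I) ℂ) (ρ : ℝ) :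
    ℕ → Fin J → ℝ
  | 0 => fun k => max ρ⁻¹ (((I : ℝ))⁻¹ * ((S k * (Wmat S 0 ρ)⁻¹).trace).re)
  | t + 1 => fun k => detEquivF S ρ (highSeq S ρ t) k

/-- **Convergence of the fixed-point iteration (Couillet et al., Theorem 1).**
For Hermitian positive semidefinite `S_1, …, S_J ∈ ℂ^{I×I}` and `ρ > 0`, the iterates
`δ_k^{(t)}` (initialized at `δ_k^{(0)} = 1/ρ`) converge, for each `k`, to a nonnegative
limit `δ_k` as `t → ∞`. -/
theorem detEquivIter_converges {I J : ℕ} (hI : 0 < I)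
    (S : Fin J → Matrix (Fin I) (Fin I) ℂ) (hS : ∀ j, (S j).PosSemidef)
    (ρ : ℝ) (hρ : 0 < ρ) :
    ∀ k, ∃ d : ℝ, 0 ≤ d ∧
      Tendsto (fun t : ℕ => detEquivIter S ρ t k) atTop (nhds d) := by
  intro k
  set l := lowSeq S ρ with hl
  set u := highSeq S ρ with hu
  set dd := detEquivIter S ρ with hdd
  -- nonnegativity
  have hln : ∀ t k', 0 ≤ l t k' := by
    intro t
    induction t with
    | zero => intro k'; exact le_refl 0
    | succ t ih => intro k'; exact f_nonneg hS hρ ih k'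
  have hun : ∀ t k', 0 ≤ u t k' := by
    intro t
    induction t with
    | zero => intro k'; exact le_trans (le_of_lt (inv_pos.mpr hρ)) (le_max_left _ _)
    | succ t ih => intro k'; exact f_nonneg hS hρ ih k'
  have hdn : ∀ t k', 0 ≤ dd t k' := by
    intro t
    induction t with
    | zero => intro k'; exact le_of_lt (inv_pos.mpr hρ)
    | succ t ih => intro k'; exact f_nonneg hS hρ ih k'
  -- monotone structure
  have hlmono : ∀ t k', l t k' ≤ l (t + 1) k' := by
    intro t
    induction t with
    | zero => intro k'; exact f_nonneg hS hρ (fun _ => le_refl 0) k'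
    | succ t ih => intro k'; exact f_mono hS hρ (hln t) ih k'
  have huanti : ∀ t k', u (t + 1) k' ≤ u t k' := by
    intro t
    induction t with
    | zero =>
      intro k'
      exact le_trans (f_le_bound hS hρ (hun 0) k') (le_max_right _ _)
    | succ t ih => intro k'; exact f_mono hS hρ (hun (t + 1)) ih k'
  have hld : ∀ t k', l t k' ≤ dd t k' := by
    intro t
    induction t with
    | zero => intro k'; exact le_of_lt (inv_pos.mpr hρ)
    | succ t ih => intro k'; exact f_mono hS hρ (hln t) ih k'
  have hdu : ∀ t k', dd t k' ≤ u t k' := by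
    intro t
    induction t with
    | zero => intro k'; exact le_max_left _ _
    | succ t ih => intro k'; exact f_mono hS hρ (hdn t) ih k'
  have hlu : ∀ t k', l t k' ≤ u t k' := fun t k' => le_trans (hld t k') (hdu t k')
  have hu_le_u0 : ∀ t k', u t k' ≤ u 0 k' := by
    intro t
    induction t with
    | zero => intro k'; exact le_refl _
    | succ t ih => intro k'; exact le_trans (huanti t k') (ih k')
  have hl_le_u0 : ∀ t k', l t k' ≤ u 0 k' := fun t k' => le_trans (hlu t k') (hu_le_u0 t k')
  -- limits
  set a : Fin J → ℝ := fun k' => ⨆ t, l t k' with ha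
  set b : Fin J → ℝ := fun k' => ⨅ t, u t k' with hb
  have hl_tends : ∀ k', Tendsto (fun t => l t k') atTop (nhds (a k')) := by
    intro k'
    exact tendsto_atTop_ciSup (monotone_nat_of_le_succ fun t => hlmono t k')
      ⟨u 0 k', by rintro x ⟨t, rfl⟩; exact hl_le_u0 t k'⟩
  have hu_tends : ∀ k', Tendsto (fun t => u t k') atTop (nhds (b k')) := by
    intro k'
    exact tendsto_atTop_ciInf (antitone_nat_of_succ_le fun t => huanti t k')
      ⟨0, by rintro x ⟨t, rfl⟩; exact hun t k'⟩
  have a_nonneg : ∀ k', 0 ≤ a k' := fun k' =>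
    ge_of_tendsto (hl_tends k') (Eventually.of_forall fun t => hln t k')
  have b_nonneg : ∀ k', 0 ≤ b k' := fun k' =>
    ge_of_tendsto (hu_tends k') (Eventually.of_forall fun t => hun t k')
  have a_le_b : ∀ k', a k' ≤ b k' := fun k' =>
    le_of_tendsto_of_tendsto' (hl_tends k') (hu_tends k') fun t => hlu t k'
  -- fixed point equations
  have hfa : ∀ k', detEquivF S ρ a k' = a k' := by
    intro k'
    have h1 : Tendsto l atTop (nhds a) := tendsto_pi_nhds.mpr hl_tends
    have h2 : Tendsto (fun t => detEquivF S ρ (l t) k') atTop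
        (nhds (detEquivF S ρ a k')) :=
      ((f_contAt hS hρ a_nonneg k').tendsto).comp h1
    have h3 : Tendsto (fun t => l (t + 1) k') atTop (nhds (a k')) :=
      (hl_tends k').comp (tendsto_add_atTop_nat 1)
    exact tendsto_nhds_unique h2 h3
  have hfb : ∀ k', detEquivF S ρ b k' = b k' := by
    intro k'
    have h1 : Tendsto u atTop (nhds b) := tendsto_pi_nhds.mpr hu_tends
    have h2 : Tendsto (fun t => detEquivF S ρ (u t) k') atTop
        (nhds (detEquivF S ρ b k')) :=
      ((f_contAt hS hρ b_nonneg k').tendsto).comp h1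
    have h3 : Tendsto (fun t => u (t + 1) k') atTop (nhds (b k')) :=
      (hu_tends k').comp (tendsto_add_atTop_nat 1)
    exact tendsto_nhds_unique h2 h3
  -- zero components
  have ha0 : ∀ k', S k' = 0 → a k' = 0 := fun k' h => by
    rw [← hfa k']; exact f_zero ρ a h
  have hb0 : ∀ k', S k' = 0 → b k' = 0 := fun k' h => by
    rw [← hfb k']; exact f_zero ρ b h
  have hapos : ∀ k', S k' ≠ 0 → 0 < a k' := fun k' h => by
    rw [← hfa k']; exact f_pos hI hS hρ a_nonneg h
  -- uniqueness via scalability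
  obtain ⟨k₀, -, hk₀⟩ := Finset.exists_max_image Finset.univ
    (fun k' => if S k' = 0 then (1:ℝ) else b k' / a k') ⟨k, Finset.mem_univ k⟩
  set α : ℝ := if S k₀ = 0 then (1:ℝ) else b k₀ / a k₀ with hαdef
  have hk₀' : ∀ k', (if S k' = 0 then (1:ℝ) else b k' / a k') ≤ α := by
    intro k'
    have := hk₀ k' (Finset.mem_univ k')
    simpa using this
  have hba : ∀ k', b k' ≤ a k' := by
    by_cases hα : α ≤ 1
    · intro k'
      by_cases h0 : S k' = 0
      · rw [ha0 k' h0, hb0 k' h0]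
      · have hgk := le_trans (hk₀' k') hα
        rw [if_neg h0] at hgk
        exact (div_le_one (hapos k' h0)).mp hgk
    · exfalso
      push_neg at hα
      have hS0 : S k₀ ≠ 0 := by
        intro h
        rw [hαdef, if_pos h] at hα
        exact lt_irrefl 1 hα
      have hak₀ : 0 < a k₀ := hapos k₀ hS0
      have hαval : α = b k₀ / a k₀ := by rw [hαdef, if_neg hS0]
      have hble : ∀ k', b k' ≤ α * a k' := by
        intro k'
        by_cases h0 : S k' = 0
        · rw [hb0 k' h0, ha0 k' h0, mul_zero]
        · have hgk := hk₀' k'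
          rw [if_neg h0] at hgk
          exact (div_le_iff₀ (hapos k' h0)).mp hgk
      have step1 : detEquivF S ρ b k₀ ≤ detEquivF S ρ (fun j => α * a j) k₀ :=
        f_mono hS hρ b_nonneg hble k₀
      have step2 : detEquivF S ρ (fun j => α * a j) k₀ < α * detEquivF S ρ a k₀ :=
        f_scal hI hS hρ a_nonneg hα hS0
      have heq : α * a k₀ = b k₀ := by
        rw [hαval, div_mul_cancel₀ _ (ne_of_gt hak₀)]
      rw [hfb k₀] at step1
      rw [hfa k₀] at step2
      linarith
  have hab : ∀ k', a k' = b k' := fun k' => le_antisymm (a_le_b k') (hba k')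
  -- squeeze
  refine ⟨a k, a_nonneg k, ?_⟩
  have hu_tends' : Tendsto (fun t => u t k) atTop (nhds (a k)) := by
    rw [hab k]; exact hu_tends k
  exact tendsto_of_tendsto_of_tendsto_of_le_of_le (hl_tends k) hu_tends'
    (fun t => hld t k) (fun t => hdu t k)
end

section
/- Fix class-c users indexed by a finite set K_c containing k, and other-class users indexed by sets K_{c̃}, c̃ ≠ c. Let U ∈ ℂ^{N×N} have orthonormal columns, partitioned into sub-matrices U_c of sizes N×N_c; for each user j of class c̃ let c_j = U_{c̃} w_j with ‖w_j‖ = 1, and set C_j = diag(c_j) ⊗ I_M. Suppose the covariance matrices have exact Kronecker structure: R_j = 1_{N×N} ⊗ Ř_j and Φ_k = 1_{N×N} ⊗ Φ̌_k with Ř_j, Φ̌_k ∈ ℂ^{M×M}. Let σ² and all powers P_{c̃} and gains g_j be positive reals. Then the matched-filter deterministic SINR γ̄_k^{MF} = P_c g_k ((1/(NM)) tr C_kΦ_kC_k^H)² / [ (σ²/(NM)²) tr C_kΦ_kC_k^H + (1/(NM)) Σ_{c̃=1}^C Σ_{j∈K_{c̃}} P_{c̃} g_j (1/(NM)) tr(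 C_j R_j C_j^H C_k Φ_k C_k^H ) ] equals P_c g_k ((1/M) tr Φ̌_k)² / [ (σ²/M²) tr Φ̌_k + (1/M) Σ_{j∈K_c} P_c g_j (1/M) |w_j^H w_k|² tr( Ř_j Φ̌_k ) ]; in particular all cross-class interference terms vanish exactly. -/
/-!
Both covariances have the all-ones matrix as their first Kronecker factor, so the diagonal code
matrices turn them into rank-one blocks: `C_j (1 ⊗ Ř) C_jᴴ = c_j c_jᴴ ⊗ Ř`. The trace of a
product of two such blocks factors as `|c_jᴴ c_k|² tr(Ř_j Φ̌_k)`, and since `U` has orthonormal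
columns, `c_jᴴ c_k` is `w_jᴴ w_k` within a class and `0` across classes. Finally, the SINR is
invariant under rescaling all traces by the common factor `N M` versus `M`.
-/

open Matrix Kronecker

namespace Matrix

variable {α l n m ι ι' : Type*}

theorem diagonal_mul_ones_mul_diagonal [CommSemiring α] [Fintype n] [DecidableEq n]
    (a b : n → α) :
    diagonal a * of (fun _ _ => (1 : α)) * diagonal b = vecMulVec a b := by
  ext i j
  simp [mul_diagonal, diagonal_mul, vecMulVec_apply]

theorem diagonal_kronecker_one_mul_ones_kronecker_mul_conjTranspose [CommSemiring α]
    [StarRing α] [Fintype n] [Fintype m] [DecidableEq n] [DecidableEq m]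
    (a : n → α) (A : Matrix m m α) :
    (diagonal a ⊗ₖ (1 : Matrix m m α)) * (of (fun _ _ => (1 : α)) ⊗ₖ A)
        * (diagonal a ⊗ₖ (1 : Matrix m m α))ᴴ
      = vecMulVec a (star a) ⊗ₖ A := by
  rw [conjTranspose_kronecker, diagonal_conjTranspose, conjTranspose_one, ← mul_kronecker_mul,
    ← mul_kronecker_mul, one_mul, mul_one, diagonal_mul_ones_mul_diagonal]

theorem trace_vecMulVec_kronecker_mul_vecMulVec_kronecker [CommSemiring α] [StarRing α]
    [Fintype n] [Fintype m] (a b : n → α) (A B : Matrix m m α) :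
    ((vecMulVec a (star a) ⊗ₖ A) * (vecMulVec b (star b) ⊗ₖ B)).trace
      = (star a ⬝ᵥ b) * (star b ⬝ᵥ a) * (A * B).trace := by
  rw [← mul_kronecker_mul, vecMulVec_mul_vecMulVec, trace_kronecker, trace_vecMulVec,
    dotProduct_smul, smul_eq_mul, dotProduct_comm a]

theorem trace_vecMulVec_kronecker_mul_vecMulVec_kronecker_eq_norm_sq [Fintype n] [Fintype m]
    (a b : n → ℂ) (A B : Matrix m m ℂ) :
    ((vecMulVec a (star a) ⊗ₖ A) * (vecMulVec b (star b) ⊗ₖ B)).trace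
      = ((‖star a ⬝ᵥ b‖ ^ 2 : ℝ) : ℂ) * (A * B).trace := by
  rw [trace_vecMulVec_kronecker_mul_vecMulVec_kronecker, star_dotProduct b, Complex.star_def,
    Complex.mul_conj', Complex.ofReal_pow]

theorem star_dotProduct_self_eq_sum_norm_sq [Fintype n] (v : n → ℂ) :
    star v ⬝ᵥ v = ((∑ i, ‖v i‖ ^ 2 : ℝ) : ℂ) := by
  push_cast
  exact Finset.sum_congr rfl fun i _ => Complex.conj_mul' (v i)

theorem star_mulVec_submatrix_dotProduct_mulVec_submatrix [CommSemiring α] [StarRing α]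
    [Fintype l] [Fintype ι] [Fintype ι'] (U : Matrix l n α) (f : ι → n) (f' : ι' → n)
    (v : ι → α) (v' : ι' → α) :
    star (U.submatrix id f *ᵥ v) ⬝ᵥ (U.submatrix id f' *ᵥ v')
      = star v ⬝ᵥ ((Uᴴ * U).submatrix f f' *ᵥ v') := by
  rw [star_mulVec, dotProduct_mulVec, vecMul_vecMul, conjTranspose_submatrix,
    ← submatrix_mul Uᴴ U f id f' Function.bijective_id, ← dotProduct_mulVec]

theorem star_mulVec_submatrix_dotProduct_mulVec_submatrix_of_injective [CommSemiring α]
    [StarRing α] [Fintype l] [Fintype ι] [DecidableEq n] [DecidableEq ι]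
    {U : Matrix l n α} (hU : Uᴴ * U = 1) {f : ι → n} (hf : Function.Injective f) (v v' : ι → α) :
    star (U.submatrix id f *ᵥ v) ⬝ᵥ (U.submatrix id f *ᵥ v') = star v ⬝ᵥ v' := by
  rw [star_mulVec_submatrix_dotProduct_mulVec_submatrix, hU, submatrix_one f hf, one_mulVec]

theorem star_mulVec_submatrix_dotProduct_mulVec_submatrix_of_disjoint [CommSemiring α]
    [StarRing α] [Fintype l] [Fintype ι] [Fintype ι'] [DecidableEq n]
    {U : Matrix l n α} (hU : Uᴴ * U = 1) {f : ι → n} {f' : ι' → n}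
    (hff' : ∀ u u', f u ≠ f' u') (v : ι → α) (v' : ι' → α) :
    star (U.submatrix id f *ᵥ v) ⬝ᵥ (U.submatrix id f' *ᵥ v') = 0 := by
  have hzero : (Uᴴ * U).submatrix f f' = 0 := by
    ext u u'
    simp [hU, hff' u u']
  rw [star_mulVec_submatrix_dotProduct_mulVec_submatrix, hzero, zero_mulVec, dotProduct_zero]

end Matrix

theorem mul_one_div_mul_sq_div_add_sum {K ι : Type*} [Field K] (s : Finset ι) (a σ T : K)
    (b S : ι → K) {q : K} (hq : q ≠ 0) :
    a * (1 / q * T) ^ 2 / (σ / q ^ 2 * T + 1 / q * ∑ j ∈ s, b j * (1 / q * S j))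
      = a * T ^ 2 / (σ * T + ∑ j ∈ s, b j * S j) := by
  have hq2 : (q ^ 2)⁻¹ ≠ 0 := inv_ne_zero (pow_ne_zero 2 hq)
  rw [← mul_div_mul_right (a * T ^ 2) _ hq2, add_mul, Finset.sum_mul, Finset.mul_sum]
  congr 1
  · ring
  · congr 1
    · ring
    · exact Finset.sum_congr rfl fun j _ => by ring

theorem moma_mf_sinr_flat_correlation_general {N M C : ℕ} (hN : 0 < N) (hM : 0 < M)
    (Nc : Fin C → ℕ) (K : Fin C → ℕ)
    (U : Matrix (Fin N) (Fin N) ℂ) (hU : Uᴴ * U = 1)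
    (e : ∀ ct : Fin C, Fin (Nc ct) → Fin N)
    (hinj : ∀ ct, Function.Injective (e ct))
    (hdisj : ∀ ct ct', ct ≠ ct' → ∀ u v, e ct u ≠ e ct' v)
    (w : ∀ ct : Fin C, Fin (K ct) → Fin (Nc ct) → ℂ)
    (hw : ∀ ct j, ∑ u, ‖w ct j u‖ ^ 2 = 1)
    (cvec : ∀ ct : Fin C, Fin (K ct) → Fin N → ℂ)
    (hcvec : ∀ ct j, cvec ct j = (U.submatrix id (e ct)).mulVec (w ct j))
    (Cm : ∀ ct : Fin C, Fin (K ct) → Matrix (Fin N × Fin M) (Fin N × Fin M) ℂ)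
    (hCm : ∀ ct j, Cm ct j
        = Matrix.diagonal (cvec ct j) ⊗ₖ (1 : Matrix (Fin M) (Fin M) ℂ))
    (Rcheck : ∀ ct : Fin C, Fin (K ct) → Matrix (Fin M) (Fin M) ℂ)
    (Rfull : ∀ ct : Fin C, Fin (K ct) → Matrix (Fin N × Fin M) (Fin N × Fin M) ℂ)
    (hRfull : ∀ ct j, Rfull ct j
        = (Matrix.of fun _ _ => (1 : ℂ) : Matrix (Fin N) (Fin N) ℂ) ⊗ₖ Rcheck ct j)
    (Phicheck : Matrix (Fin M) (Fin M) ℂ)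
    (Phifull : Matrix (Fin N × Fin M) (Fin N × Fin M) ℂ)
    (hPhifull : Phifull
        = (Matrix.of fun _ _ => (1 : ℂ) : Matrix (Fin N) (Fin N) ℂ) ⊗ₖ Phicheck)
    (σ2 : ℝ)
    (P : Fin C → ℝ)
    (g : ∀ ct : Fin C, Fin (K ct) → ℝ)
    (c : Fin C) (k : Fin (K c)) :
    (((P c * g c k : ℝ) : ℂ) *
        ((1 / ((N : ℂ) * M)) * (Cm c k * Phifull * (Cm c k)ᴴ).trace) ^ 2 /
      (((σ2 : ℂ) / ((N : ℂ) * M) ^ 2) * (Cm c k * Phifull * (Cm c k)ᴴ).trace +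
        (1 / ((N : ℂ) * M)) * ∑ ct : Fin C, ∑ j : Fin (K ct),
          ((P ct * g ct j : ℝ) : ℂ) * ((1 / ((N : ℂ) * M)) *
            (Cm ct j * Rfull ct j * (Cm ct j)ᴴ *
              (Cm c k * Phifull * (Cm c k)ᴴ)).trace))
      = ((P c * g c k : ℝ) : ℂ) * ((1 / (M : ℂ)) * Phicheck.trace) ^ 2 /
        (((σ2 : ℂ) / (M : ℂ) ^ 2) * Phicheck.trace +
          (1 / (M : ℂ)) * ∑ j : Fin (K c),
            ((P c * g c j : ℝ) : ℂ) * ((1 / (M : ℂ)) *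
              ((‖star (w c j) ⬝ᵥ w c k‖ ^ 2 : ℝ) : ℂ) *
              (Rcheck c j * Phicheck).trace))) ∧
    (∀ ct : Fin C, ct ≠ c → ∀ j : Fin (K ct),
      (Cm ct j * Rfull ct j * (Cm ct j)ᴴ * (Cm c k * Phifull * (Cm c k)ᴴ)).trace = 0) := by
  have hcode : ∀ ct j (A : Matrix (Fin M) (Fin M) ℂ),
      Cm ct j * ((of fun _ _ => (1 : ℂ) : Matrix (Fin N) (Fin N) ℂ) ⊗ₖ A) * (Cm ct j)ᴴ
        = vecMulVec (cvec ct j) (star (cvec ct j)) ⊗ₖ A := fun ct j A => by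
    rw [hCm, diagonal_kronecker_one_mul_ones_kronecker_mul_conjTranspose]
  have hsame : ∀ j, star (cvec c j) ⬝ᵥ cvec c k = star (w c j) ⬝ᵥ w c k := fun j => by
    rw [hcvec, hcvec, star_mulVec_submatrix_dotProduct_mulVec_submatrix_of_injective hU (hinj c)]
  have hcross : ∀ ct, ct ≠ c → ∀ j, star (cvec ct j) ⬝ᵥ cvec c k = 0 := fun ct hct j => by
    rw [hcvec, hcvec,
      star_mulVec_submatrix_dotProduct_mulVec_submatrix_of_disjoint hU (hdisj ct c hct)]
  have hsignal : (Cm c k * Phifull * (Cm c k)ᴴ).trace = Phicheck.trace := by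
    rw [hPhifull, hcode, trace_kronecker, trace_vecMulVec, dotProduct_comm, hsame,
      star_dotProduct_self_eq_sum_norm_sq, hw, Complex.ofReal_one, one_mul]
  have hinterference : ∀ ct j,
      (Cm ct j * Rfull ct j * (Cm ct j)ᴴ * (Cm c k * Phifull * (Cm c k)ᴴ)).trace
        = ((‖star (cvec ct j) ⬝ᵥ cvec c k‖ ^ 2 : ℝ) : ℂ) * (Rcheck ct j * Phicheck).trace :=
    fun ct j => by
      rw [hRfull, hPhifull, hcode, hcode,
        trace_vecMulVec_kronecker_mul_vecMulVec_kronecker_eq_norm_sq]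
  have hcross_zero : ∀ ct, ct ≠ c → ∀ j,
      (Cm ct j * Rfull ct j * (Cm ct j)ᴴ * (Cm c k * Phifull * (Cm c k)ᴴ)).trace = 0 :=
    fun ct hct j => by simp [hinterference, hcross ct hct j]
  refine ⟨?_, hcross_zero⟩
  have hNM : ((N : ℂ) * M) ≠ 0 := by exact_mod_cast (Nat.mul_pos hN hM).ne'
  have hM' : (M : ℂ) ≠ 0 := by exact_mod_cast hM.ne'
  rw [hsignal, Fintype.sum_eq_single c fun ct hct =>
      Finset.sum_eq_zero fun j _ => by rw [hcross_zero ct hct j, mul_zero, mul_zero],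
    mul_one_div_mul_sq_div_add_sum _ _ _ _ _ _ hNM]
  simp_rw [mul_assoc (1 / (M : ℂ)), mul_one_div_mul_sq_div_add_sum _ _ _ _ _ _ hM',
    hinterference, hsame]

/-- **Corollary 1 of the paper: the matched-filter deterministic SINR under exact flat
(Kronecker) correlation.**
There are `C` service classes; class `c̃` has `K c̃` users with signatures
`w c̃ j ∈ ℂ^{Nc c̃}` of unit norm.  The spreading code of user `j` of class `c̃` is
`c_j = U_{c̃} w_j`, where `U` has orthonormal columns and `U_{c̃}` is the `N × (Nc c̃)`
sub-matrix of its columns selected by the injection `e c̃` (the ranges being pairwise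
disjoint); its code matrix is `C_j = diag(c_j) ⊗ I_M`.  The covariance matrices have exact
Kronecker structure `R_j = 1_{N×N} ⊗ Ř_j` and `Φ_k = 1_{N×N} ⊗ Φ̌_k`.  Then for a user `k`
of class `c`, the matched-filter deterministic SINR
`γ̄_k^MF = P_c g_k ((1/(NM)) tr C_kΦ_kC_kᴴ)² / [ (σ²/(NM)²) tr C_kΦ_kC_kᴴ +
(1/(NM)) ∑_{c̃} ∑_{j∈K_{c̃}} P_{c̃} g_j (1/(NM)) tr( C_j R_j C_jᴴ C_k Φ_k C_kᴴ ) ]`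
equals
`P_c g_k ((1/M) tr Φ̌_k)² / [ (σ²/M²) tr Φ̌_k +
(1/M) ∑_{j∈K_c} P_c g_j (1/M) |w_jᴴ w_k|² tr( Ř_j Φ̌_k ) ]`;
in particular all cross-class interference terms vanish exactly. -/
theorem moma_mf_sinr_flat_correlation {N M C : ℕ} (hN : 0 < N) (hM : 0 < M)
    (Nc : Fin C → ℕ) (K : Fin C → ℕ)
    (U : Matrix (Fin N) (Fin N) ℂ) (hU : Uᴴ * U = 1)
    (e : ∀ ct : Fin C, Fin (Nc ct) → Fin N)
    (hinj : ∀ ct, Function.Injective (e ct))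
    (hdisj : ∀ ct ct', ct ≠ ct' → ∀ u v, e ct u ≠ e ct' v)
    (w : ∀ ct : Fin C, Fin (K ct) → Fin (Nc ct) → ℂ)
    (hw : ∀ ct j, ∑ u, ‖w ct j u‖ ^ 2 = 1)
    (cvec : ∀ ct : Fin C, Fin (K ct) → Fin N → ℂ)
    (hcvec : ∀ ct j, cvec ct j = (U.submatrix id (e ct)).mulVec (w ct j))
    (Cm : ∀ ct : Fin C, Fin (K ct) → Matrix (Fin N × Fin M) (Fin N × Fin M) ℂ)
    (hCm : ∀ ct j, Cm ct j
        = Matrix.diagonal (cvec ct j) ⊗ₖ (1 : Matrix (Fin M) (Fin M) ℂ))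
    (Rcheck : ∀ ct : Fin C, Fin (K ct) → Matrix (Fin M) (Fin M) ℂ)
    (Rfull : ∀ ct : Fin C, Fin (K ct) → Matrix (Fin N × Fin M) (Fin N × Fin M) ℂ)
    (hRfull : ∀ ct j, Rfull ct j
        = (Matrix.of fun _ _ => (1 : ℂ) : Matrix (Fin N) (Fin N) ℂ) ⊗ₖ Rcheck ct j)
    (Phicheck : Matrix (Fin M) (Fin M) ℂ)
    (Phifull : Matrix (Fin N × Fin M) (Fin N × Fin M) ℂ)
    (hPhifull : Phifull
        = (Matrix.of fun _ _ => (1 : ℂ) : Matrix (Fin N) (Fin N) ℂ) ⊗ₖ Phicheck)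
    (σ2 : ℝ) (hσ2 : 0 < σ2)
    (P : Fin C → ℝ) (hP : ∀ ct, 0 < P ct)
    (g : ∀ ct : Fin C, Fin (K ct) → ℝ) (hg : ∀ ct j, 0 < g ct j)
    (c : Fin C) (k : Fin (K c)) :
    (((P c * g c k : ℝ) : ℂ) *
        ((1 / ((N : ℂ) * M)) * (Cm c k * Phifull * (Cm c k)ᴴ).trace) ^ 2 /
      (((σ2 : ℂ) / ((N : ℂ) * M) ^ 2) * (Cm c k * Phifull * (Cm c k)ᴴ).trace +
        (1 / ((N : ℂ) * M)) * ∑ ct : Fin C, ∑ j : Fin (K ct),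
          ((P ct * g ct j : ℝ) : ℂ) * ((1 / ((N : ℂ) * M)) *
            (Cm ct j * Rfull ct j * (Cm ct j)ᴴ *
              (Cm c k * Phifull * (Cm c k)ᴴ)).trace))
      = ((P c * g c k : ℝ) : ℂ) * ((1 / (M : ℂ)) * Phicheck.trace) ^ 2 /
        (((σ2 : ℂ) / (M : ℂ) ^ 2) * Phicheck.trace +
          (1 / (M : ℂ)) * ∑ j : Fin (K c),
            ((P c * g c j : ℝ) : ℂ) * ((1 / (M : ℂ)) *
              ((‖star (w c j) ⬝ᵥ w c k‖ ^ 2 : ℝ) : ℂ) *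
              (Rcheck c j * Phicheck).trace))) ∧
    (∀ ct : Fin C, ct ≠ c → ∀ j : Fin (K ct),
      (Cm ct j * Rfull ct j * (Cm ct j)ᴴ * (Cm c k * Phifull * (Cm c k)ᴴ)).trace = 0) :=
  moma_mf_sinr_flat_correlation_general hN hM Nc K U hU e hinj hdisj w hw cvec hcvec Cm hCm Rcheck
    Rfull hRfull Phicheck Phifull hPhifull σ2 P g c k
end
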